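/- Let a > 0, R > 0, and p : S² → ℝ with ∫_{S²} p(u)² du ≥ π a² and ∫_{S²} p(u) du = 2π a. Then ∫_{S²} ∫₀^a 4π² (R² − (p(u) − t)²) dt du ≤ 16π³ (R² a − a³/12). -/

import Mathlib

open MeasureTheory Metric

noncomputable section

abbrev E3 := EuclideanSpace ℝ (Fin 3)

/-- The surface measure on the unit sphere `S² ⊂ ℝ³` (total mass `4π`). -/
def sphereMeasure : Measure (sphere (0 : E3) 1) := (volume : Measure E3).toSphere

instance : IsFiniteMeasure sphereMeasure :=
  inferInstanceAs (IsFiniteMeasure (volume : Measure E3).toSphere)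

lemma sphereMeasure_real_univ : sphereMeasure.real Set.univ = 4 * Real.pi := by
  rw [sphereMeasure, Measure.toSphere_real_apply_univ, finrank_euclideanSpace_fin,
    measureReal_def, EuclideanSpace.volume_ball_fin_three, ENNReal.ofReal_one, one_pow, one_mul, ENNReal.toReal_ofReal (by positivity)]
  push_cast
  ring

lemma intervalIntegral_sq_sub_sq_sub (R c a : ℝ) :
    ∫ t in (0 : ℝ)..a, (R ^ 2 - (c - t) ^ 2) = R ^ 2 * a - a ^ 3 / 3 + a ^ 2 * c - a * c ^ 2 := by
  have hcont : Continuous fun t : ℝ => (c - t) ^ 2 := by fun_prop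
  rw [intervalIntegral.integral_sub intervalIntegrable_const (hcont.intervalIntegrable 0 a),
    intervalIntegral.integral_comp_sub_left (fun x => x ^ 2), integral_pow]
  simp only [intervalIntegral.integral_const, sub_zero, smul_eq_mul, Nat.reduceAdd, Nat.cast_ofNat]
  ring

lemma integral_const_add_mul_sub_mul_sq {α : Type*} [MeasurableSpace α] {μ : Measure α}
    [IsFiniteMeasure μ] {f : α → ℝ} (hf : Integrable f μ) (hf2 : Integrable (fun x => f x ^ 2) μ)
    (A B C : ℝ) :
    ∫ x, (A + B * f x - C * f x ^ 2) ∂μ =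
      A * μ.real Set.univ + B * ∫ x, f x ∂μ - C * ∫ x, f x ^ 2 ∂μ := by
  have hlin : Integrable (fun x => A + B * f x) μ := (integrable_const A).add (hf.const_mul B)
  rw [integral_sub hlin (hf2.const_mul C),
    integral_add (integrable_const A) (hf.const_mul B), integral_const, integral_const_mul,
    integral_const_mul, smul_eq_mul, mul_comm]

theorem key_estimate_constant_width_general
    (a R : ℝ) (ha : 0 < a) (p : sphere (0 : E3) 1 → ℝ)
    (hpi : Integrable p sphereMeasure)
    (hpi2 : Integrable (fun u => p u ^ 2) sphereMeasure)
    (hp2 : Real.pi * a ^ 2 ≤ ∫ u, p u ^ 2 ∂sphereMeasure)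
    (hp1 : (∫ u, p u ∂sphereMeasure) = 2 * Real.pi * a) :
    (∫ u, (∫ t in (0 : ℝ)..a, 4 * Real.pi ^ 2 * (R ^ 2 - (p u - t) ^ 2)) ∂sphereMeasure) ≤
      16 * Real.pi ^ 3 * (R ^ 2 * a - a ^ 3 / 12) := by
  simp_rw [intervalIntegral.integral_const_mul, intervalIntegral_sq_sub_sq_sub]
  rw [integral_const_mul, integral_const_add_mul_sub_mul_sq hpi hpi2, hp1, sphereMeasure_real_univ]
  have hp2a := mul_le_mul_of_nonneg_left hp2 (by positivity : 0 ≤ 4 * Real.pi ^ 2 * a)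
  linarith

/-- Let `a > 0`, `R > 0` and `p : S² → ℝ` with `∫_{S²} p(u)² du ≥ π a²` and
`∫_{S²} p(u) du = 2π a`.  Then
`∫_{S²} ∫₀^a 4π² (R² − (p(u) − t)²) dt du ≤ 16π³ (R² a − a³/12)`. -/
theorem key_estimate_constant_width
    (a R : ℝ) (ha : 0 < a) (hR : 0 < R) (p : sphere (0 : E3) 1 → ℝ)
    (hpi : Integrable p sphereMeasure)
    (hpi2 : Integrable (fun u => p u ^ 2) sphereMeasure)
    (hp2 : Real.pi * a ^ 2 ≤ ∫ u, p u ^ 2 ∂sphereMeasure)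
    (hp1 : (∫ u, p u ∂sphereMeasure) = 2 * Real.pi * a) :
    (∫ u, (∫ t in (0 : ℝ)..a, 4 * Real.pi ^ 2 * (R ^ 2 - (p u - t) ^ 2)) ∂sphereMeasure) ≤
      16 * Real.pi ^ 3 * (R ^ 2 * a - a ^ 3 / 12) :=
  key_estimate_constant_width_general a R ha p hpi hpi2 hp2 hp1

end
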